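/- arXiv:0706.4358 — 4 statements merged into one kernel-verified Lean document; each statement's English description precedes it below -/
import Mathlib

section
/- Let V ⊆ F_2^n be a spanning binary linear code of dimension d. Then the sum of |v|^2 over all words v in V equals 2^{d-1}(a_2^* + n(n+1)/2), where a_2^* is the number of weight-2 words in the dual code V*. -/
open Finset

/-- Hamming weight of a word over `ZMod 2`. -/
def wt {ι : Type*} [Fintype ι] (v : ι → ZMod 2) : ℕ :=
  (Finset.univ.filter fun i => v i ≠ 0).card

/-- The dual code: annihilator under the standard scalar product. -/
def dualCode {n : ℕ} (V : Submodule (ZMod 2) (Fin n → ZMod 2)) :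
    Submodule (ZMod 2) (Fin n → ZMod 2) where
  carrier := {w | ∀ v ∈ V, ∑ i, v i * w i = 0}
  add_mem' := by
    intro a b ha hb v hv
    simp only [Pi.add_apply, mul_add, Finset.sum_add_distrib, ha v hv, hb v hv, add_zero]
  zero_mem' := by intro v hv; simp
  smul_mem' := by
    intro c a ha v hv
    have h := ha v hv
    calc ∑ i, v i * (c • a) i = c * ∑ i, v i * a i := by
          simp [Finset.mul_sum, mul_left_comm]
      _ = 0 := by rw [h, mul_zero]

/-- A code is spanning if the union of supports of its words is everything. -/
def Spanning {n : ℕ} (V : Submodule (ZMod 2) (Fin n → ZMod 2)) : Prop :=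
  ∀ i : Fin n, ∃ v ∈ V, v i ≠ 0

/-! Writing `|v|² = ∑_{i,j} [v i ≠ 0][v j ≠ 0]` and swapping the sums, each ordered pair `(i, j)`
contributes the number of codewords that are nonzero at both `i` and `j`. By inclusion–exclusion
this is expressed through the coordinate functionals `v ↦ v i`, `v ↦ v j`, `v ↦ v i + v j`, and a
nonzero functional `V → 𝔽₂` is nonzero on exactly half of `V`. Spanning makes every coordinate
functional nonzero, so the pair contributes `|V|/2` if coordinates `i` and `j` agree on all of `V`
and `|V|/4` otherwise. For `i ≠ j` they agree exactly when `e_i + e_j ∈ V*`, so there are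
`n + 2 a₂*` agreeing ordered pairs. -/

section Weight

variable {ι : Type*} [Fintype ι]

lemma wt_sq_eq_card (v : ι → ZMod 2) :
    wt v ^ 2 = #{p : ι × ι | v p.1 ≠ 0 ∧ v p.2 ≠ 0} := by
  rw [wt, sq, ← card_product, ← filter_product, univ_product_univ]

lemma sum_wt_sq_eq_sum_card {β : Type*} [Fintype β] (g : β → ι → ZMod 2) :
    ∑ x, wt (g x) ^ 2 = ∑ p : ι × ι, #{x | g x p.1 ≠ 0 ∧ g x p.2 ≠ 0} := by
  simp_rw [wt_sq_eq_card]
  exact sum_card_bipartiteAbove_eq_sum_card_bipartiteBelow _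

def indicatorWord [DecidableEq ι] (s : Finset ι) : ι → ZMod 2 := fun k => if k ∈ s then 1 else 0

variable [DecidableEq ι]

lemma filter_indicatorWord_ne_zero (s : Finset ι) :
    ({k | indicatorWord s k ≠ 0} : Finset ι) = s := by
  ext k; by_cases hk : k ∈ s <;> simp [indicatorWord, hk]

lemma indicatorWord_filter_ne_zero (w : ι → ZMod 2) : indicatorWord {k | w k ≠ 0} = w := by
  funext k
  have hone : ∀ z : ZMod 2, z ≠ 0 → 1 = z := by decide
  by_cases hk : w k = 0
  · simp [indicatorWord, hk]
  · simp [indicatorWord, hk, hone _ hk]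

lemma wt_indicatorWord (s : Finset ι) : wt (indicatorWord s) = #s :=
  congrArg card (filter_indicatorWord_ne_zero s)

lemma sum_mul_indicatorWord (v : ι → ZMod 2) (s : Finset ι) :
    ∑ k, v k * indicatorWord s k = ∑ k ∈ s, v k := by
  simp [indicatorWord, sum_ite_mem]

lemma ncard_filter_wt_eq (P : (ι → ZMod 2) → Prop) [DecidablePred P] (k : ℕ) :
    {w | P w ∧ wt w = k}.ncard = #{t ∈ univ.powersetCard k | P (indicatorWord t)} := by
  have hinj : Function.Injective (indicatorWord (ι := ι)) :=
    Function.LeftInverse.injective (g := fun w : ι → ZMod 2 => ({k | w k ≠ 0} : Finset ι))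
      filter_indicatorWord_ne_zero
  rw [← card_image_of_injective _ hinj, ← Set.ncard_coe_finset]
  congr 1
  ext w
  simp only [Set.mem_ofPred_eq, coe_image, coe_filter, mem_powersetCard, subset_univ, true_and,
    Set.mem_image]
  constructor
  · rintro ⟨hP, hw⟩
    refine ⟨({k | w k ≠ 0} : Finset ι), ?_, indicatorWord_filter_ne_zero w⟩
    rw [indicatorWord_filter_ne_zero]
    exact ⟨hw, hP⟩
  · rintro ⟨t, ⟨ht, hP⟩, rfl⟩
    exact ⟨hP, by rw [wt_indicatorWord, ht]⟩

end Weight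

lemma card_filter_offDiag_pair {α : Type*} [DecidableEq α] (s : Finset α) (P : Finset α → Prop)
    [DecidablePred P] :
    #{p ∈ s.offDiag | P {p.1, p.2}} = 2 * #{t ∈ s.powersetCard 2 | P t} := by
  rw [card_eq_sum_card_fiberwise (f := fun p : α × α => ({p.1, p.2} : Finset α))
    (t := {t ∈ s.powersetCard 2 | P t})]
  · rw [mul_comm, ← smul_eq_mul, ← sum_const]
    refine sum_congr rfl fun t ht => ?_
    obtain ⟨hts, htcard⟩ := mem_powersetCard.1 (mem_filter.1 ht).1
    have hfiber : {p ∈ {p ∈ s.offDiag | P {p.1, p.2}} | ({p.1, p.2} : Finset α) = t}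
        = t.offDiag := by
      ext ⟨a, b⟩
      simp only [mem_filter, mem_offDiag]
      constructor
      · rintro ⟨⟨⟨-, -, hab⟩, -⟩, rfl⟩
        simp [hab]
      · rintro ⟨ha, hb, hab⟩
        have hpair : ({a, b} : Finset α) = t :=
          eq_of_subset_of_card_le (insert_subset ha (singleton_subset_iff.2 hb))
            (by rw [htcard, card_pair hab])
        subst hpair
        exact ⟨⟨⟨hts ha, hts hb, hab⟩, (mem_filter.1 ht).2⟩, rfl⟩
    rw [hfiber, offDiag_card, htcard]
  · intro p hp
    rw [mem_coe] at hp
    obtain ⟨⟨h1, h2, hne⟩, hP⟩ := by simpa using hp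
    simp [hP, h1, h2, insert_subset_iff, card_pair hne]

lemma two_mul_card_ne_zero {M : Type*} [AddGroup M] [Fintype M]
    (f : M →+ ZMod 2) (hf : f ≠ 0) : 2 * #{x | f x ≠ 0} = Fintype.card M := by
  obtain ⟨a, ha⟩ : ∃ a, f a ≠ 0 := by
    by_contra! h
    exact hf (AddMonoidHom.ext h)
  have hshift : #{x | f x = 0} = #{x | f x ≠ 0} := by
    refine card_nbij' (· + a) (· - a) (fun x hx => ?_) (fun x hx => ?_) (fun x _ => by simp)
      (fun x _ => by simp)
    · simp_all
    · have hsub : ∀ y z : ZMod 2, y ≠ 0 → z ≠ 0 → y - z = 0 := by decide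
      simp only [coe_filter, mem_univ, true_and, Set.mem_ofPred_eq, map_sub] at hx ⊢
      exact hsub _ _ hx ha
  rw [← card_univ, ← card_filter_add_card_filter_not (s := univ) (p := fun x => f x = 0), hshift,
    two_mul]

section Code

variable {n : ℕ} (V : Submodule (ZMod 2) (Fin n → ZMod 2))

def coord (i : Fin n) : V →+ ZMod 2 :=
  (Pi.evalAddMonoidHom (fun _ => ZMod 2) i).comp V.toAddSubgroup.subtype

@[simp] lemma coord_apply (i : Fin n) (v : V) : coord V i v = (v : Fin n → ZMod 2) i := rfl

variable {V}

lemma Spanning.finrank_pos (hspan : Spanning V) (hn : 0 < n) : 0 < Module.finrank (ZMod 2) V := by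
  obtain ⟨v, hv, hvi⟩ := hspan ⟨0, hn⟩
  exact Module.finrank_pos_iff_exists_ne_zero.2
    ⟨⟨v, hv⟩, fun h => hvi (congrFun (congrArg Subtype.val h) _)⟩

lemma coord_ne_zero (hspan : Spanning V) (i : Fin n) : coord V i ≠ 0 := by
  obtain ⟨v, hv, hvi⟩ := hspan i
  exact fun h => hvi (DFunLike.congr_fun h ⟨v, hv⟩)

lemma coord_add_coord_eq_zero_iff (i j : Fin n) :
    coord V i + coord V j = 0 ↔ ∀ v ∈ V, v i = v j := by
  have hchar : ∀ y z : ZMod 2, y + z = 0 ↔ y = z := by decide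
  simp [AddMonoidHom.ext_iff, hchar]

lemma indicatorWord_pair_mem_dualCode {i j : Fin n} (hij : i ≠ j) :
    indicatorWord {i, j} ∈ dualCode V ↔ ∀ v ∈ V, v i = v j := by
  have hchar : ∀ y z : ZMod 2, y + z = 0 ↔ y = z := by decide
  change (∀ v ∈ V, _) ↔ _
  simp only [sum_mul_indicatorWord, sum_pair hij, hchar]

open Classical in
lemma four_mul_card_filter_ne_zero_and_ne_zero [Fintype V] (hspan : Spanning V) (i j : Fin n) :
    4 * #{v : V | (v : Fin n → ZMod 2) i ≠ 0 ∧ (v : Fin n → ZMod 2) j ≠ 0} =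
      Fintype.card V * if ∀ v ∈ V, v i = v j then 2 else 1 := by
  -- inclusion–exclusion for the events `v i ≠ 0`, `v j ≠ 0`, pointwise in `ZMod 2`
  have hpoint : ∀ y z : ZMod 2, 2 * (if y ≠ 0 ∧ z ≠ 0 then 1 else 0) + (if y + z ≠ 0 then 1 else 0)
      = (if y ≠ 0 then 1 else 0) + (if z ≠ 0 then (1 : ℕ) else 0) := by decide
  have hincl : 2 * #{v : V | (v : Fin n → ZMod 2) i ≠ 0 ∧ (v : Fin n → ZMod 2) j ≠ 0}
      + #{v : V | (v : Fin n → ZMod 2) i + (v : Fin n → ZMod 2) j ≠ 0}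
      = #{v : V | (v : Fin n → ZMod 2) i ≠ 0} + #{v : V | (v : Fin n → ZMod 2) j ≠ 0} := by
    simp only [card_filter, mul_sum, ← sum_add_distrib, hpoint]
  have hi : 2 * #{v : V | (v : Fin n → ZMod 2) i ≠ 0} = Fintype.card V :=
    two_mul_card_ne_zero _ (coord_ne_zero hspan i)
  have hj : 2 * #{v : V | (v : Fin n → ZMod 2) j ≠ 0} = Fintype.card V :=
    two_mul_card_ne_zero _ (coord_ne_zero hspan j)
  split_ifs with hagree
  · have hsum : #{v : V | (v : Fin n → ZMod 2) i + (v : Fin n → ZMod 2) j ≠ 0} = 0 := by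
      simpa using DFunLike.congr_fun ((coord_add_coord_eq_zero_iff i j).2 hagree)
    omega
  · have hsum : 2 * #{v : V | (v : Fin n → ZMod 2) i + (v : Fin n → ZMod 2) j ≠ 0}
        = Fintype.card V :=
      two_mul_card_ne_zero _ (mt (coord_add_coord_eq_zero_iff i j).1 hagree)
    omega

open Classical in
lemma card_filter_coords_agree :
    #{p : Fin n × Fin n | ∀ v ∈ V, v p.1 = v p.2} =
      n + 2 * {w | w ∈ dualCode V ∧ wt w = 2}.ncard := by
  have hsplit : (univ : Finset (Fin n × Fin n)) = univ.diag ∪ univ.offDiag := by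
    rw [diag_union_offDiag, univ_product_univ]
  have hdiag : {p ∈ (univ : Finset (Fin n)).diag | ∀ v ∈ V, v p.1 = v p.2} = univ.diag :=
    filter_true_of_mem fun p hp => by simp [(mem_diag.1 hp).2]
  have hoffDiag : {p ∈ (univ : Finset (Fin n)).offDiag | ∀ v ∈ V, v p.1 = v p.2} =
      {p ∈ (univ : Finset (Fin n)).offDiag | indicatorWord {p.1, p.2} ∈ dualCode V} :=
    filter_congr fun p hp => (indicatorWord_pair_mem_dualCode (mem_offDiag.1 hp).2.2).symm
  rw [ncard_filter_wt_eq, ← card_filter_offDiag_pair, hsplit, filter_union,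
    card_union_of_disjoint (disjoint_filter_filter (disjoint_diag_offDiag _)), hdiag, hoffDiag,
    diag_card, card_univ, Fintype.card_fin]

end Code

theorem stmt4 {n d : ℕ} (V : Submodule (ZMod 2) (Fin n → ZMod 2)) [Fintype V]
    (hspan : Spanning V) (hd : Module.finrank (ZMod 2) V = d) :
    ∑ v : V, (wt (v : Fin n → ZMod 2)) ^ 2 =
      2 ^ (d - 1) * ({w | w ∈ dualCode V ∧ wt w = 2}.ncard + n * (n + 1) / 2) := by
  classical
  set a := {w | w ∈ dualCode V ∧ wt w = 2}.ncard
  rcases Nat.eq_zero_or_pos n with rfl | hn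
  · simp [wt, a]
  obtain ⟨d, rfl⟩ := Nat.exists_eq_add_one_of_ne_zero (hd ▸ (hspan.finrank_pos hn).ne')
  have hcard : Fintype.card V = 2 ^ (d + 1) := by
    rw [Module.card_eq_pow_finrank (K := ZMod 2), hd, ZMod.card]
  have hpairs : ∑ p : Fin n × Fin n, (if ∀ v ∈ V, v p.1 = v p.2 then 2 else 1) =
      n * n + (n + 2 * a) := by
    have hsplit := card_filter_add_card_filter_not (s := univ)
      (fun p : Fin n × Fin n => ∀ v ∈ V, v p.1 = v p.2)
    rw [card_univ, Fintype.card_prod, Fintype.card_fin] at hsplit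
    rw [sum_ite, sum_const, sum_const, smul_eq_mul, smul_eq_mul, ← card_filter_coords_agree]
    omega
  have hfour : 4 * ∑ v : V, wt (v : Fin n → ZMod 2) ^ 2 = 2 ^ (d + 1) * (n * n + n + 2 * a) := by
    rw [sum_wt_sq_eq_sum_card, mul_sum]
    simp_rw [four_mul_card_filter_ne_zero_and_ne_zero hspan, ← mul_sum, hpairs, hcard]
    ring
  have hhalf : n * (n + 1) / 2 * 2 = n * (n + 1) :=
    Nat.div_mul_cancel (Nat.even_mul_succ_self n).two_dvd
  apply Nat.eq_of_mul_eq_mul_left (by norm_num : 0 < 4)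
  rw [hfour, Nat.add_sub_cancel]
  linear_combination 2 * 2 ^ d * hhalf.symm
end

section
/- Let V ⊆ F_2^n be a binary linear code of dimension d, w ∈ V a nonzero word, and π the projection onto the complement of the support of w. If w cannot be written as a sum v + v' of two nonzero words of V with disjoint supports, then π(V) is a code of dimension d - 1. -/
open Finset

theorem stmt7 {n d : ℕ} (V : Submodule (ZMod 2) (Fin n → ZMod 2))
    (hd : Module.finrank (ZMod 2) V = d)
    (w : Fin n → ZMod 2) (hw : w ∈ V) (hw0 : w ≠ 0)
    (hnotsum : ¬ ∃ v v' : Fin n → ZMod 2, v ∈ V ∧ v' ∈ V ∧ v ≠ 0 ∧ v' ≠ 0 ∧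
      (∀ i, v i ≠ 0 → v' i = 0) ∧ w = v + v') :
    Module.finrank (ZMod 2)
      (V.map (LinearMap.funLeft (ZMod 2) (ZMod 2)
        (fun i : {i : Fin n // w i = 0} => (i : Fin n)))) = d - 1 := by
  classical
  set L := LinearMap.funLeft (ZMod 2) (ZMod 2)
    (fun i : {i : Fin n // w i = 0} => (i : Fin n)) with hL
  have hker : LinearMap.ker (L.domRestrict V)
      = Submodule.span (ZMod 2) {(⟨w, hw⟩ : V)} := by
    apply le_antisymm
    · intro v hv
      have hcond : ∀ i : Fin n, w i = 0 → (v : Fin n → ZMod 2) i = 0 := by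
        intro i hi
        have := congrFun (LinearMap.mem_ker.mp hv) ⟨i, hi⟩
        simpa [hL, LinearMap.funLeft] using this
      by_cases hv0 : (v : Fin n → ZMod 2) = 0
      · have : v = 0 := Subtype.ext hv0
        simp [this]
      by_cases hvw : (v : Fin n → ZMod 2) = w
      · exact Submodule.subset_span (show v ∈ ({⟨w, hw⟩} : Set V) from by
          simp only [Set.mem_singleton_iff]; exact Subtype.ext hvw)
      · exfalso
        apply hnotsum
        refine ⟨v, w + v, v.2, V.add_mem hw v.2, hv0, ?_, ?_, ?_⟩
        · intro h0
          apply hvw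
          funext i
          have hi := congrFun h0 i
          revert hi
          have : ∀ a b : ZMod 2, a + b = 0 → b = a := by decide
          exact this (w i) ((v : Fin n → ZMod 2) i)
        · intro i hvi
          have hwi : w i ≠ 0 := fun h => hvi (hcond i h)
          have : ∀ a b : ZMod 2, a ≠ 0 → b ≠ 0 → a + b = 0 := by decide
          exact this (w i) ((v : Fin n → ZMod 2) i) hwi hvi
        · funext i
          have : ∀ a b : ZMod 2, a = b + (a + b) := by decide
          exact this (w i) ((v : Fin n → ZMod 2) i)
    · rw [Submodule.span_le, Set.singleton_subset_iff]
      have : (L.domRestrict V) ⟨w, hw⟩ = 0 := by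
        funext i
        simpa [hL, LinearMap.funLeft] using i.2
      simpa [LinearMap.mem_ker] using this
  have h1 : Module.finrank (ZMod 2) (LinearMap.ker (L.domRestrict V)) = 1 := by
    rw [hker]
    refine finrank_span_singleton ?_
    intro h
    exact hw0 (by simpa using congrArg Subtype.val h)
  have h2 := LinearMap.finrank_range_add_finrank_ker (L.domRestrict V)
  rw [LinearMap.range_domRestrict, h1, hd] at h2
  omega
end

section
/- Let V ⊆ F_2^n be a binary linear code all of whose nonzero words have weight 24 or 32. Then dim V ≤ 9. -/
/-!
Write `wt v = ∑ᵢ (φᵢ v).val` with `φᵢ` the coordinate functionals of `V`. A nonzero functional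
`V →+ ZMod 2` equals `1` on exactly half of `V`, and since `2yz = y + z - (y + z)` on `{0, 1}`,
two nonzero functionals are both `1` on a quarter of `V` unless they coincide. Hence
`2 ∑ wt = |V| s` and `4 ∑ wt² = |V| (2 n s - E)`, where `s` counts the nonzero `φᵢ` and `E` the
ordered pairs with `φᵢ ≠ φⱼ`, an even number. If every nonzero weight is `a` or `b`, then
`∑ (wt - a)(wt - b) = ab`, the contribution of `0`; inserting the two moments gives `|V| ∣ 2ab`.
For weights `24` and `32` this says `2 ^ dim V ∣ 2⁹ · 3`.
-/

open Finset

lemma even_card_filter_ne {ι α : Type*} [Fintype ι] [DecidableEq α] (f : ι → α) :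
    Even #{p : ι × ι | f p.1 ≠ f p.2} := by
  -- handshake lemma for the pullback of the complete graph along `f`
  let G : SimpleGraph ι := (⊤ : SimpleGraph α).comap f
  have hdeg : ∀ i, G.degree i = #{j | f i ≠ f j} := fun i => by
    rw [← G.card_neighborFinset_eq_degree]; congr 1; ext j; simp [G]
  have hsum : #{p : ι × ι | f p.1 ≠ f p.2} = ∑ i, G.degree i := by
    simp only [hdeg, card_filter, Fintype.sum_prod_type]
  rw [hsum, G.sum_degrees_eq_twice_card_edges]
  exact even_two_mul _

lemma wt_eq_sum_val {ι : Type*} [Fintype ι] (v : ι → ZMod 2) : wt v = ∑ i, (v i).val := by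
  rw [wt, card_filter]
  exact sum_congr rfl fun i _ => by generalize v i = x; fin_cases x <;> rfl

lemma sum_sq_add_mul_card_of_two_values {α : Type*} [Fintype α] (w : α → ℕ) (x₀ : α)
    {a b : ℕ} (h₀ : w x₀ = 0) (hw : ∀ x ≠ x₀, w x = a ∨ w x = b) :
    ∑ x, w x ^ 2 + a * b * Fintype.card α = (a + b) * ∑ x, w x + a * b := by
  classical
  have hpt : ∀ x, w x ^ 2 + a * b = (a + b) * w x + if x = x₀ then a * b else 0 := by
    intro x
    by_cases hx : x = x₀
    · simp [hx, h₀]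
    · rcases hw x hx with h | h <;> simp only [h, hx, if_false] <;> ring
  have := Finset.sum_congr rfl fun x (_ : x ∈ univ) => hpt x
  simp only [sum_add_distrib, ← mul_sum, sum_ite_eq', mem_univ, if_true, sum_const, card_univ,
    smul_eq_mul] at this
  linarith

section Moments

variable {G : Type*} [AddCommGroup G] [Fintype G]

lemma two_mul_sum_val_eq (f : G →+ ZMod 2) :
    2 * ∑ x, (f x).val = if f ≠ 0 then Fintype.card G else 0 := by
  by_cases hf : f = 0
  · simp [hf]
  rw [if_pos hf]
  obtain ⟨a, ha⟩ : ∃ a, f a = 1 := by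
    obtain ⟨a, ha⟩ := DFunLike.ne_iff.mp hf
    exact ⟨a, (by decide : ∀ y : ZMod 2, y ≠ 0 → y = 1) _ ha⟩
  have hflip : ∀ y : ZMod 2, y.val + (y + 1).val = 1 := by decide
  have hshift : ∑ x, (f (x + a)).val = ∑ x, (f x).val :=
    Fintype.sum_equiv (Equiv.addRight a) _ _ fun _ => rfl
  -- translation by `a` exchanges the two fibres of `f`
  calc 2 * ∑ x, (f x).val = ∑ x, ((f x).val + (f (x + a)).val) := by
        rw [sum_add_distrib, hshift, two_mul]
    _ = Fintype.card G := by simp [map_add, ha, hflip]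

lemma four_mul_sum_val_mul_val_add (f g : G →+ ZMod 2) :
    4 * ∑ x, (f x).val * (g x).val + (if f ≠ g then Fintype.card G else 0)
      = (if f ≠ 0 then Fintype.card G else 0) + (if g ≠ 0 then Fintype.card G else 0) := by
  have hpt : ∀ y z : ZMod 2, 2 * (y.val * z.val) + (y + z).val = y.val + z.val := by decide
  have hsum : 2 * ∑ x, (f x).val * (g x).val + ∑ x, ((f + g) x).val
      = ∑ x, (f x).val + ∑ x, (g x).val := by
    simp only [mul_sum, ← sum_add_distrib, AddMonoidHom.add_apply, hpt]
  have hfg : f + g = 0 ↔ f = g := by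
    have hneg : -g = g := by ext x; exact ZMod.neg_eq_self_mod_two _
    rw [add_eq_zero_iff_eq_neg, hneg]
  have hsum_fg : 2 * ∑ x, ((f + g) x).val = if f ≠ g then Fintype.card G else 0 := by
    simpa only [ne_eq, hfg] using two_mul_sum_val_eq (f + g)
  rw [← two_mul_sum_val_eq, ← two_mul_sum_val_eq, ← hsum_fg]
  omega

variable {ι : Type*} [Fintype ι] (φ : ι → G →+ ZMod 2)

lemma two_mul_sum_sum_val :
    2 * ∑ x, ∑ i, (φ i x).val = Fintype.card G * #{i | φ i ≠ 0} := by
  rw [sum_comm, mul_sum]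
  simp only [two_mul_sum_val_eq]
  rw [← sum_filter, sum_const, smul_eq_mul, mul_comm]

lemma four_mul_sum_sq_sum_val_add :
    4 * ∑ x, (∑ i, (φ i x).val) ^ 2 + Fintype.card G * #{p : ι × ι | φ p.1 ≠ φ p.2}
      = 2 * Fintype.card G * Fintype.card ι * #{i | φ i ≠ 0} := by
  set N := Fintype.card G
  let c : ι → ℕ := fun i => if φ i ≠ 0 then N else 0
  have hc : ∑ i, c i = N * #{i | φ i ≠ 0} := by
    rw [← sum_filter, sum_const, smul_eq_mul, mul_comm]
  have hsq : ∀ x, (∑ i, (φ i x).val) ^ 2 = ∑ p : ι × ι, (φ p.1 x).val * (φ p.2 x).val :=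
    fun x => by rw [sq, sum_mul_sum, Fintype.sum_prod_type]
  calc 4 * ∑ x, (∑ i, (φ i x).val) ^ 2 + N * #{p : ι × ι | φ p.1 ≠ φ p.2}
      = ∑ p : ι × ι, (4 * ∑ x, (φ p.1 x).val * (φ p.2 x).val
          + if φ p.1 ≠ φ p.2 then N else 0) := by
        rw [sum_add_distrib, ← sum_filter, sum_const, smul_eq_mul, mul_comm N]
        simp only [hsq]
        rw [sum_comm, mul_sum]
    _ = ∑ p : ι × ι, (c p.1 + c p.2) :=
        sum_congr rfl fun p _ => four_mul_sum_val_mul_val_add _ _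
    _ = 2 * N * Fintype.card ι * #{i | φ i ≠ 0} := by
        simp only [sum_add_distrib, Fintype.sum_prod_type, sum_const, card_univ,
          smul_eq_mul, ← mul_sum, hc]
        ring

end Moments

theorem natCard_dvd_two_mul_mul_of_two_weights {ι : Type*} [Fintype ι]
    (V : Submodule (ZMod 2) (ι → ZMod 2)) {a b : ℕ}
    (hwt : ∀ v ∈ V, v ≠ 0 → wt v = a ∨ wt v = b) :
    Nat.card V ∣ 2 * a * b := by
  classical
  let _ : Fintype V := Fintype.ofFinite V
  let φ : ι → V →+ ZMod 2 := fun i =>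
    (Pi.evalAddMonoidHom (fun _ => ZMod 2) i).comp V.subtype.toAddMonoidHom
  have hw : ∀ v : V, wt (v : ι → ZMod 2) = ∑ i, (φ i v).val := fun v => wt_eq_sum_val _
  have h₁ := two_mul_sum_sum_val φ
  have h₂ := four_mul_sum_sq_sum_val_add φ
  obtain ⟨e, he⟩ := even_card_filter_ne φ
  have h₃ := sum_sq_add_mul_card_of_two_values (fun v : V => wt (v : ι → ZMod 2)) 0 (by simp [wt])
    fun v hv => hwt v v.2 (by simpa using hv)
  simp only [hw] at h₃
  rw [he] at h₂
  rw [Nat.card_eq_fintype_card]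
  set N := Fintype.card V
  set s := #{i | φ i ≠ 0}
  set S₁ := ∑ v : V, ∑ i, (φ i v).val
  set S₂ := ∑ v : V, (∑ i, (φ i v).val) ^ 2
  have h₂' : 2 * S₂ + N * e = N * Fintype.card ι * s := by linarith
  refine Int.natCast_dvd_natCast.mp ⟨Fintype.card ι * s - e + 2 * a * b - (a + b) * s, ?_⟩
  zify at h₁ h₂' h₃
  push_cast
  linear_combination -2 * h₃ + h₂' - (a + b : ℤ) * h₁

theorem stmt8 {n : ℕ} (V : Submodule (ZMod 2) (Fin n → ZMod 2))
    (hwt : ∀ v ∈ V, v ≠ 0 → wt v = 24 ∨ wt v = 32) :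
    Module.finrank (ZMod 2) V ≤ 9 := by
  have hdvd := natCard_dvd_two_mul_mul_of_two_weights V hwt
  rw [Module.natCard_eq_pow_finrank (K := ZMod 2), Nat.card_zmod] at hdvd
  by_contra! h
  exact absurd ((Nat.pow_dvd_pow 2 h).trans hdvd) (by norm_num)
end

section
/- Let V ⊆ F_2^{66} be a spanning binary linear code of dimension 13 with all nonzero weights in {24, 32, 40, 56}. Then a_{56} = a_2^* − (a_3^* + 13)/2, where a_{56} is the number of weight-56 words of V and a_i^* the number of weight-i words of V*; in particular, if a_{56} ≤ 1 then a_2^* ≥ 7. -/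
open Finset

/-!
Put `W(x) = ∑ᵢ (-1)^{xᵢ} = n - 2 wt(x)`. Expanding `W(v)^r` as a sum over `r`-tuples of
coordinates and summing over `v ∈ V`, character orthogonality shows that `∑_{v ∈ V} W(v)^r` is
`|V|` times the number of `r`-tuples whose indicator sum lies in `V*`. For a spanning code these
counts are `0`, `n + 2 a₂*` and `6 a₃*` for `r = 1, 2, 3`. Summing over `V` the cubic
`(W - 18)(W - 2)(W + 14)`, which vanishes on the weights `24, 32, 40`, then expresses `a₅₆` through
`a₂*` and `a₃*`.
-/

open scoped Nat Classical

lemma AddChar.map_sum_eq_prod {A M ι : Type*} [AddCommMonoid A] [CommMonoid M]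
    (ψ : AddChar A M) (s : Finset ι) (f : ι → A) :
    ψ (∑ i ∈ s, f i) = ∏ i ∈ s, ψ (f i) := by
  induction s using Finset.induction_on with
  | empty => simp
  | insert a s ha ih => rw [sum_insert ha, prod_insert ha, AddChar.map_add_eq_mul, ih]

def signChar : AddChar (ZMod 2) ℤ where
  toFun a := if a = 0 then 1 else -1
  map_zero_eq_one' := rfl
  map_add_eq_mul' := by decide

lemma signChar_eq_one_iff (a : ZMod 2) : signChar a = 1 ↔ a = 0 := by
  revert a; decide

lemma signChar_eq (a : ZMod 2) : signChar a = 1 - 2 * (if a ≠ 0 then 1 else 0) := by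
  revert a; decide

lemma sum_signChar_dot {n : ℕ} (V : Submodule (ZMod 2) (Fin n → ZMod 2)) (w : Fin n → ZMod 2) :
    ∑ v : V, signChar (∑ i, (v : Fin n → ZMod 2) i * w i)
      = if w ∈ dualCode V then (Fintype.card V : ℤ) else 0 := by
  let dot : V →+ ZMod 2 := AddMonoidHom.mk' (fun v => ∑ i, (v : Fin n → ZMod 2) i * w i)
    (fun u v => by simp [add_mul, sum_add_distrib])
  have htrivial : signChar.compAddMonoidHom dot = 0 ↔ w ∈ dualCode V := by
    simp [AddChar.eq_zero_iff, signChar_eq_one_iff, dot, dualCode]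
  have h := AddChar.sum_eq_ite (signChar.compAddMonoidHom dot)
  simp only [htrivial] at h
  exact h

section SignedWeight

variable {α : Type*} [Fintype α]

def signedWeight (x : α → ZMod 2) : ℤ := ∑ i, signChar (x i)

lemma signedWeight_eq (x : α → ZMod 2) :
    signedWeight x = Fintype.card α - 2 * wt x := by
  rw [signedWeight, wt]
  simp only [signChar_eq, sum_sub_distrib, ← mul_sum, sum_boole]
  simp

lemma signedWeight_pow (x : α → ZMod 2) (r : ℕ) :
    signedWeight x ^ r = ∑ ι : Fin r → α, signChar (∑ j, x (ι j)) := by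
  simp [signedWeight, Fintype.sum_pow, AddChar.map_sum_eq_prod]

end SignedWeight

section TupleWord

variable {α : Type*} [DecidableEq α] {r : ℕ}

def tupleWord (ι : Fin r → α) : α → ZMod 2 := ∑ j, Pi.single (ι j) 1

lemma dot_tupleWord [Fintype α] (x : α → ZMod 2) (ι : Fin r → α) :
    ∑ i, x i * tupleWord ι i = ∑ j, x (ι j) := by
  simp only [tupleWord, Finset.sum_apply, mul_sum]
  rw [sum_comm]
  simp [Pi.single_apply]

lemma tupleWord_apply_of_injective {ι : Fin r → α} (hι : Function.Injective ι) (i : α) :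
    tupleWord ι i = if i ∈ univ.image ι then 1 else 0 := by
  simp only [tupleWord, Finset.sum_apply, Pi.single_apply, mem_image, mem_univ, true_and]
  split_ifs with h
  · obtain ⟨j, rfl⟩ := h
    rw [Fintype.sum_eq_single j fun k hk => if_neg fun h => hk (hι h.symm), if_pos rfl]
  · exact sum_eq_zero fun j _ => if_neg fun hj => h ⟨j, hj.symm⟩

lemma tupleWord_eq_iff_of_injective [Fintype α] {ι : Fin r → α} (hι : Function.Injective ι)
    (w : α → ZMod 2) : tupleWord ι = w ↔ univ.image ι = ({i | w i ≠ 0} : Finset α) := by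
  simp only [funext_iff, Finset.ext_iff, tupleWord_apply_of_injective hι, mem_filter,
    mem_univ, true_and]
  refine forall_congr' fun i => ?_
  generalize w i = a
  by_cases h : i ∈ univ.image ι <;> simp only [h, if_true, if_false, true_iff, false_iff] <;>
    revert a <;> decide

lemma card_injective_image_eq [Fintype α] (S : Finset α) (hS : #S = r) :
    #{ι : Fin r → α | Function.Injective ι ∧ univ.image ι = S} = r ! := by
  subst hS
  have hcard := Fintype.card_equiv S.equivFin.symm
  rw [Fintype.card_fin] at hcard
  rw [← hcard, ← Finset.card_univ]
  refine (card_bij (fun e _ => fun j => (e j : α)) (fun e _ => ?_) (fun e₁ _ e₂ _ h => ?_)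
    (fun ι hι => ?_)).symm
  · refine mem_filter.2 ⟨mem_univ _, fun a b h => e.injective (Subtype.ext h), ?_⟩
    ext x
    simp only [mem_image, mem_univ, true_and]
    exact ⟨fun ⟨j, hj⟩ => hj ▸ (e j).2, fun hx => ⟨e.symm ⟨x, hx⟩, by simp⟩⟩
  · exact Equiv.ext fun j => Subtype.ext (congrFun h j)
  · obtain ⟨hinj, himg⟩ := (mem_filter.1 hι).2
    have hmem : ∀ j, ι j ∈ S := fun j => himg ▸ mem_image_of_mem ι (mem_univ j)
    refine ⟨Equiv.ofBijective (fun j => ⟨ι j, hmem j⟩) ⟨fun a b h => hinj ?_, fun x => ?_⟩,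
      mem_univ _, rfl⟩
    · exact congrArg Subtype.val h
    · obtain ⟨j, -, hj⟩ := mem_image.1 (himg.symm ▸ x.2 : (x : α) ∈ univ.image ι)
      exact ⟨j, Subtype.ext hj⟩

lemma card_injective_tupleWord [Fintype α] (P : (α → ZMod 2) → Prop) [DecidablePred P] (r : ℕ) :
    #{ι : Fin r → α | Function.Injective ι ∧ P (tupleWord ι)}
      = r ! * #{w : α → ZMod 2 | P w ∧ wt w = r} := by
  rw [card_eq_sum_card_fiberwise (f := tupleWord) (t := {w | P w ∧ wt w = r}), mul_comm,
    ← smul_eq_mul, ← sum_const]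
  · refine sum_congr rfl fun w hw => ?_
    obtain ⟨hP, hwt⟩ := (mem_filter.1 hw).2
    rw [filter_filter, ← card_injective_image_eq ({i | w i ≠ 0} : Finset α) hwt]
    congr 1
    refine filter_congr fun ι _ => ?_
    constructor
    · rintro ⟨⟨hι, -⟩, h⟩
      exact ⟨hι, (tupleWord_eq_iff_of_injective hι w).1 h⟩
    · rintro ⟨hι, h⟩
      have h' := (tupleWord_eq_iff_of_injective hι w).2 h
      exact ⟨⟨hι, h' ▸ hP⟩, h'⟩
  · intro ι hι
    obtain ⟨hι, hP⟩ := (mem_filter.1 hι).2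
    refine mem_filter.2 ⟨mem_univ _, hP, ?_⟩
    rw [wt, ← (tupleWord_eq_iff_of_injective hι _).1 rfl, card_image_of_injective _ hι,
      Finset.card_univ, Fintype.card_fin]

lemma single_add_single_self (i : α) : (Pi.single i 1 + Pi.single i 1 : α → ZMod 2) = 0 := by
  rw [← Pi.single_add, show (1 + 1 : ZMod 2) = 0 from rfl, Pi.single_zero]

end TupleWord

lemma not_injective_fin_two_iff {β : Type*} (ι : Fin 2 → β) :
    ¬ Function.Injective ι ↔ ι 0 = ι 1 := by
  refine ⟨fun h => by_contra fun h01 => h fun a b hab => ?_,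
    fun h hinj => absurd (hinj h) (by decide)⟩
  fin_cases a <;> fin_cases b <;> simp_all [eq_comm]

lemma not_injective_fin_three {β : Type*} {ι : Fin 3 → β} (h : ¬ Function.Injective ι) :
    ι 0 = ι 1 ∨ ι 0 = ι 2 ∨ ι 1 = ι 2 := by
  by_contra! hne
  exact h fun a b hab => by fin_cases a <;> fin_cases b <;> simp_all [eq_comm]

lemma ncard_setOf_eq_card_filter {β : Type*} [Fintype β] (p : β → Prop) [DecidablePred p] :
    {x | p x}.ncard = #{x | p x} := by
  rw [← Set.ncard_coe_finset, coe_filter]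
  simp

section PowerMoments

variable {n : ℕ} (V : Submodule (ZMod 2) (Fin n → ZMod 2))

noncomputable def annihilatingTuples (r : ℕ) : Finset (Fin r → Fin n) :=
  {ι | tupleWord ι ∈ dualCode V}

lemma sum_signedWeight_pow (r : ℕ) :
    ∑ v : V, signedWeight (v : Fin n → ZMod 2) ^ r
      = Fintype.card V * #(annihilatingTuples V r) := by
  simp_rw [signedWeight_pow, ← dot_tupleWord]
  rw [sum_comm]
  simp_rw [sum_signChar_dot]
  rw [sum_ite, sum_const_zero, add_zero, sum_const, nsmul_eq_mul, mul_comm]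
  rfl

lemma card_annihilatingTuples_eq (r : ℕ) :
    #(annihilatingTuples V r)
      = r ! * #{w | w ∈ dualCode V ∧ wt w = r}
        + #{ι : Fin r → Fin n | ¬ Function.Injective ι ∧ tupleWord ι ∈ dualCode V} := by
  rw [← card_injective_tupleWord, annihilatingTuples, ← card_filter_add_card_filter_not
    (p := Function.Injective), filter_filter, filter_filter]
  simp only [and_comm]

lemma Spanning.single_notMem_dualCode (hspan : Spanning V) (i : Fin n) :
    Pi.single i 1 ∉ dualCode V := fun h => by
  obtain ⟨v, hv, hvi⟩ := hspan i
  exact hvi (by simpa [Pi.single_apply] using h v hv)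

lemma card_annihilatingTuples_one (hspan : Spanning V) : #(annihilatingTuples V 1) = 0 := by
  rw [Finset.card_eq_zero, annihilatingTuples, filter_eq_empty_iff]
  intro ι _
  simpa [tupleWord] using hspan.single_notMem_dualCode V (ι 0)

lemma card_annihilatingTuples_two :
    #(annihilatingTuples V 2) = n + 2 * #{w | w ∈ dualCode V ∧ wt w = 2} := by
  have hdiag : #{ι : Fin 2 → Fin n | ¬ Function.Injective ι ∧ tupleWord ι ∈ dualCode V} = n := by
    have hzero : ∀ ι : Fin 2 → Fin n, ι 0 = ι 1 → tupleWord ι = 0 := fun ι h => by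
      simp [tupleWord, Fin.sum_univ_two, h, single_add_single_self]
    refine (card_equiv (finTwoArrowEquiv (Fin n)) (t := univ.diag) fun ι => ?_).trans
      (by rw [diag_card, Finset.card_univ, Fintype.card_fin])
    simp only [not_injective_fin_two_iff, mem_filter, mem_univ, true_and, mem_diag,
      finTwoArrowEquiv_apply]
    exact ⟨fun h => h.1, fun h => ⟨h, hzero ι h ▸ (dualCode V).zero_mem⟩⟩
  rw [card_annihilatingTuples_eq, hdiag, Nat.factorial_two]
  ring

lemma card_annihilatingTuples_three (hspan : Spanning V) :
    #(annihilatingTuples V 3) = 6 * #{w | w ∈ dualCode V ∧ wt w = 3} := by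
  have hempty : #{ι : Fin 3 → Fin n | ¬ Function.Injective ι ∧ tupleWord ι ∈ dualCode V} = 0 := by
    rw [Finset.card_eq_zero, filter_eq_empty_iff]
    rintro ι - ⟨hι, hmem⟩
    obtain ⟨i, hi⟩ : ∃ i, tupleWord ι = Pi.single i 1 := by
      simp only [tupleWord, Fin.sum_univ_three]
      rcases not_injective_fin_three hι with h | h | h
      · exact ⟨ι 2, by rw [h, single_add_single_self, zero_add]⟩
      · exact ⟨ι 1, by rw [h, add_right_comm, single_add_single_self, zero_add]⟩
      · exact ⟨ι 0, by rw [h, add_assoc, single_add_single_self, add_zero]⟩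
    exact hspan.single_notMem_dualCode V i (hi ▸ hmem)
  rw [card_annihilatingTuples_eq, hempty, add_zero]
  rfl

lemma sum_signedWeight (hspan : Spanning V) :
    ∑ v : V, signedWeight (v : Fin n → ZMod 2) = 0 := by
  simpa [card_annihilatingTuples_one V hspan] using sum_signedWeight_pow V 1

lemma sum_signedWeight_sq :
    ∑ v : V, signedWeight (v : Fin n → ZMod 2) ^ 2
      = Fintype.card V * (n + 2 * #{w | w ∈ dualCode V ∧ wt w = 2}) := by
  rw [sum_signedWeight_pow, card_annihilatingTuples_two]
  push_cast
  ring

lemma sum_signedWeight_cube (hspan : Spanning V) :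
    ∑ v : V, signedWeight (v : Fin n → ZMod 2) ^ 3
      = Fintype.card V * (6 * #{w | w ∈ dualCode V ∧ wt w = 3}) := by
  rw [sum_signedWeight_pow, card_annihilatingTuples_three V hspan]
  push_cast
  ring

lemma card_filter_subtype_eq_ncard (p : (Fin n → ZMod 2) → Prop) [DecidablePred p] :
    #{v : V | p v} = {v | v ∈ V ∧ p v}.ncard := by
  rw [← Set.ncard_coe_finset, ← Set.ncard_image_of_injective _ Subtype.val_injective]
  congr 1
  ext x
  simp [and_comm]

end PowerMoments

-- Its roots `18, 2, -14` are the signed weights `66 - 2 wt` of the weights `24, 32, 40`; it is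
-- nonzero only at `66` (the zero word) and `-46` (weight `56`).
def weightCubic (t : ℤ) : ℤ := (t - 18) * (t - 2) * (t + 14)

lemma sum_weightCubic_signedWeight_of_spanning {n : ℕ} (V : Submodule (ZMod 2) (Fin n → ZMod 2))
    (hspan : Spanning V) :
    ∑ v : V, weightCubic (signedWeight (v : Fin n → ZMod 2))
      = Fintype.card V * (6 * #{w | w ∈ dualCode V ∧ wt w = 3}
          - 6 * (n + 2 * #{w | w ∈ dualCode V ∧ wt w = 2}) + 504) := by
  have hexpand : ∀ t, weightCubic t = t ^ 3 - 6 * t ^ 2 - 244 * t + 504 := fun t => by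
    rw [weightCubic]; ring
  simp only [hexpand, sum_add_distrib, sum_sub_distrib, ← mul_sum, sum_signedWeight_cube V hspan,
    sum_signedWeight_sq, sum_signedWeight V hspan, sum_const, Finset.card_univ, nsmul_eq_mul]
  ring

lemma weightCubic_signedWeight (V : Submodule (ZMod 2) (Fin 66 → ZMod 2))
    (hwt : ∀ v ∈ V, v ≠ 0 → wt v = 24 ∨ wt v = 32 ∨ wt v = 40 ∨ wt v = 56) (v : V) :
    weightCubic (signedWeight (v : Fin 66 → ZMod 2))
      = (if v = 0 then 245760 else 0) - (if wt (v : Fin 66 → ZMod 2) = 56 then 98304 else 0) := by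
  rw [signedWeight_eq, Fintype.card_fin, weightCubic]
  by_cases hv : v = 0
  · have h0 : wt (v : Fin 66 → ZMod 2) = 0 := by simp [hv, wt]
    rw [if_pos hv, h0]
    norm_num
  · rcases hwt v v.2 (by simpa using hv) with h | h | h | h <;> rw [if_neg hv, h] <;> norm_num

lemma sum_weightCubic_signedWeight_of_weights (V : Submodule (ZMod 2) (Fin 66 → ZMod 2))
    (hwt : ∀ v ∈ V, v ≠ 0 → wt v = 24 ∨ wt v = 32 ∨ wt v = 40 ∨ wt v = 56) :
    ∑ v : V, weightCubic (signedWeight (v : Fin 66 → ZMod 2))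
      = 245760 - 98304 * #{v : V | wt (v : Fin 66 → ZMod 2) = 56} := by
  rw [sum_congr rfl fun v _ => weightCubic_signedWeight V hwt v, sum_sub_distrib, sum_ite_eq',
    sum_ite, sum_const_zero, add_zero, sum_const, if_pos (mem_univ _), nsmul_eq_mul, mul_comm]

theorem stmt19 (V : Submodule (ZMod 2) (Fin 66 → ZMod 2))
    (hspan : Spanning V) (hd : Module.finrank (ZMod 2) V = 13)
    (hwt : ∀ v ∈ V, v ≠ 0 → wt v = 24 ∨ wt v = 32 ∨ wt v = 40 ∨ wt v = 56) :
    2 * ({v | v ∈ V ∧ wt v = 56}.ncard : ℤ) =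
        2 * ({w | w ∈ dualCode V ∧ wt w = 2}.ncard : ℤ)
          - ({w | w ∈ dualCode V ∧ wt w = 3}.ncard : ℤ) - 13 ∧
    ({v | v ∈ V ∧ wt v = 56}.ncard ≤ 1 → 7 ≤ {w | w ∈ dualCode V ∧ wt w = 2}.ncard) := by
  have hcard : Fintype.card V = 2 ^ 13 := by
    rw [Module.card_eq_pow_finrank (K := ZMod 2), hd, ZMod.card]
  have h := (sum_weightCubic_signedWeight_of_weights V hwt).symm.trans
    (sum_weightCubic_signedWeight_of_spanning V hspan)
  rw [hcard, card_filter_subtype_eq_ncard V (fun v => wt v = 56),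
    ← ncard_setOf_eq_card_filter (fun w => w ∈ dualCode V ∧ wt w = 2),
    ← ncard_setOf_eq_card_filter (fun w => w ∈ dualCode V ∧ wt w = 3)] at h
  push_cast at h
  omega
end
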